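/- Let f be a permutation of G such that for every S ∈ {{e}, Z \ {e}} ∪ {Y_i : i ∈ F_q} and all g, h ∈ G one has hg⁻¹ ∈ S if and only if f(h)f(g)⁻¹ ∈ S. If f(e) = e and f(y₀) = y₀, where y₀ = g(1,0,0), then f(z) = z for every z ∈ Z. Moreover, if additionally f(y) = y for some y ∈ G \ Z, then f(Zy) = Zy and f fixes the coset Zy pointwise. -/

import Mathlib

/-- The Heisenberg group `H₃(F)` of upper unitriangular 3×3 matrices over `F`,
recorded by the three free entries: `x` in position (1,2), `y` in position (2,3),
`z` in position (1,3). -/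
@[ext]
structure Heis (F : Type*) where
  x : F
  y : F
  z : F
deriving DecidableEq

namespace Heis

variable {F : Type*} [Field F]

/-- Multiplication corresponding to the matrix product. -/
instance : Group (Heis F) where
  mul a b := ⟨a.x + b.x, a.y + b.y, a.z + b.z + a.x * b.y⟩
  one := ⟨0, 0, 0⟩
  inv a := ⟨-a.x, -a.y, -a.z + a.x * a.y⟩
  mul_assoc a b c := Heis.ext
    (show a.x + b.x + c.x = a.x + (b.x + c.x) by ring)
    (show a.y + b.y + c.y = a.y + (b.y + c.y) by ring)
    (show a.z + b.z + a.x * b.y + c.z + (a.x + b.x) * c.y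
        = a.z + (b.z + c.z + b.x * c.y) + a.x * (b.y + c.y) by ring)
  one_mul a := Heis.ext
    (show (0 : F) + a.x = a.x by ring)
    (show (0 : F) + a.y = a.y by ring)
    (show (0 : F) + a.z + 0 * a.y = a.z by ring)
  mul_one a := Heis.ext
    (show a.x + 0 = a.x by ring)
    (show a.y + 0 = a.y by ring)
    (show a.z + 0 + a.x * 0 = a.z by ring)
  inv_mul_cancel a := Heis.ext
    (show -a.x + a.x = 0 by ring)
    (show -a.y + a.y = 0 by ring)
    (show -a.z + a.x * a.y + a.z + -a.x * a.y = 0 by ring)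

instance [Fintype F] : Fintype (Heis F) :=
  Fintype.ofEquiv (F × F × F)
    ⟨fun p => ⟨p.1, p.2.1, p.2.2⟩, fun a => (a.x, a.y, a.z), fun _ => rfl, fun _ => rfl⟩

end Heis

/-- The element `g(x,y,z)` of the Heisenberg group. -/
def gElt {F : Type*} (x y z : F) : Heis F := ⟨x, y, z⟩

/-- The center `Z = {g(0,0,z) : z ∈ F}` of the Heisenberg group, as a set. -/
def Zset (F : Type*) [Field F] : Set (Heis F) := {g : Heis F | g.x = 0 ∧ g.y = 0}

/-- The center `Z` as a subgroup of the Heisenberg group. -/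
def Zsub (F : Type*) [Field F] : Subgroup (Heis F) where
  carrier := Zset F
  mul_mem' := fun {a b} ha hb =>
    ⟨show a.x + b.x = 0 by rw [ha.1, hb.1, add_zero],
     show a.y + b.y = 0 by rw [ha.2, hb.2, add_zero]⟩
  one_mem' := ⟨rfl, rfl⟩
  inv_mem' := fun {a} ha =>
    ⟨show -a.x = 0 by rw [ha.1, neg_zero],
     show -a.y = 0 by rw [ha.2, neg_zero]⟩

/-- `γ_i(α,β) = αβ/2 + (α² − εβ²)i`. -/
def gam {F : Type*} [Field F] (ε i α β : F) : F := α * β / 2 + (α ^ 2 - ε * β ^ 2) * i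

/-- `Y_i = {g(α, β, γ_i(α,β)) : (α,β) ≠ (0,0)}`. -/
def Yset {F : Type*} [Field F] (ε i : F) : Set (Heis F) :=
  {g : Heis F | ∃ α β : F, (α, β) ≠ (0, 0) ∧ g = gElt α β (gam ε i α β)}

/-- `X_i = Y_i ∪ {e}`. -/
def Xset {F : Type*} [Field F] (ε i : F) : Set (Heis F) := Yset ε i ∪ {1}

/-- The map `ρ(M) : G → G` attached to the matrix `M = [[α,β],[εβ,α]]`. -/
def rho {F : Type*} [Field F] (ε α β : F) : Heis F → Heis F := fun g =>
  gElt (α * g.x + ε * β * g.y) (β * g.x + α * g.y)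
    (α * β * (g.x ^ 2 / 2 + ε * g.y ^ 2 / 2) + ε * β ^ 2 * g.x * g.y
      + (α ^ 2 - ε * β ^ 2) * g.z)

/-- `K = {ρ(M) : M = [[α,β],[εβ,α]], (α,β) ≠ (0,0)}`, as a set of maps `G → G`. -/
def Kset {F : Type*} [Field F] (ε : F) : Set (Heis F → Heis F) :=
  {f | ∃ α β : F, (α, β) ≠ (0, 0) ∧ f = rho ε α β}

/-- The family of sets `{e}`, `Z \ {e}`, `Y_i` for `i ∈ F`. -/
def SFam {F : Type*} [Field F] (ε : F) : Set (Set (Heis F)) :=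
  insert {1} (insert (Zset F \ {1}) {S | ∃ i : F, S = Yset ε i})

/-- `f` preserves each of the basic sets `{e}`, `Z \ {e}`, `Y_i`:
`hg⁻¹ ∈ S ↔ f(h)f(g)⁻¹ ∈ S`. -/
def Preserves {F : Type*} [Field F] (ε : F) (f : Heis F → Heis F) : Prop :=
  ∀ S ∈ SFam ε, ∀ g h : Heis F, h * g⁻¹ ∈ S ↔ f h * (f g)⁻¹ ∈ S

/-- The set of permutations of `G` of the form `x ↦ σ(x)·c` with `σ ∈ K`, `c ∈ G`. -/
def Aset {F : Type*} [Field F] (ε : F) : Set (Equiv.Perm (Heis F)) :=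
  {f | ∃ σ ∈ Kset ε, ∃ c : Heis F, ∀ x : Heis F, f x = σ x * c}

/-- The operation `ψ` on `F ∪ {∞}`, with `∞` encoded as `none`. -/
def psi {F : Type*} [Field F] [DecidableEq F] (ε : F) : Option F → Option F → Option F
  | none, j => j
  | some i, none => some i
  | some i, some j => if i + j = 0 then none else some ((i * j + ε / 16) / (i + j))

/-- `Y_k` for `k ∈ F ∪ {∞}`, where `Y_∞ = Z \ {e}`. -/
def YInf {F : Type*} [Field F] (ε : F) : Option F → Set (Heis F)
  | some i => Yset ε i
  | none => Zset F \ {1}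

/-!
Preserving `{e}` and `Z \ {e}` means `f` maps `Z`-cosets to `Z`-cosets: if `f a = a`, then `f`
maps the coset `Z a` into itself. Off the centre the sets `Y_i` partition by the `z`-coordinate:
since `ε` is a nonsquare, `α² - εβ² ≠ 0` for `(α, β) ≠ (0, 0)`, so exactly one `Y_i` contains a
given `g(α, β, z)`. Hence if `b` is a second fixed point outside `Z a`, the elements `h b⁻¹` and
`f(h) b⁻¹` have the same `x`, `y` and lie in the same `Y_i`, so `f h = h` for all `h ∈ Z a`.
For the centre take `a = e`, `b = y₀`; for the coset `Z y` take `a = y`, `b = e`.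
-/

namespace Heis

variable {F : Type*} [Field F]

@[simp] lemma mul_x (a b : Heis F) : (a * b).x = a.x + b.x := rfl
@[simp] lemma mul_y (a b : Heis F) : (a * b).y = a.y + b.y := rfl
@[simp] lemma inv_x (a : Heis F) : a⁻¹.x = -a.x := rfl
@[simp] lemma inv_y (a : Heis F) : a⁻¹.y = -a.y := rfl
@[simp] lemma one_x : (1 : Heis F).x = 0 := rfl
@[simp] lemma one_y : (1 : Heis F).y = 0 := rfl

lemma mul_inv_mem_Zset_iff {g h : Heis F} : h * g⁻¹ ∈ Zset F ↔ h.x = g.x ∧ h.y = g.y := by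
  simp [Zset, add_neg_eq_zero]

end Heis

section Yset

variable {F : Type*} [Field F] {ε : F}

lemma sq_sub_mul_sq_ne_zero (hε : ¬IsSquare ε) {α β : F} (h : ¬(α = 0 ∧ β = 0)) :
    α ^ 2 - ε * β ^ 2 ≠ 0 := by
  intro hz
  by_cases hβ : β = 0
  · exact h ⟨pow_eq_zero_iff two_ne_zero |>.mp (by simpa [hβ] using hz), hβ⟩
  · exact hε ⟨α / β, by field_simp; linear_combination -hz⟩

lemma exists_gam_eq (hε : ¬IsSquare ε) {α β : F} (h : ¬(α = 0 ∧ β = 0)) (c : F) :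
    ∃ i, gam ε i α β = c :=
  ⟨(c - α * β / 2) / (α ^ 2 - ε * β ^ 2), by
    rw [gam, mul_div_cancel₀ _ (sq_sub_mul_sq_ne_zero hε h)]
    ring⟩

lemma mem_Yset_iff {w : Heis F} (hw : w ∉ Zset F) {i : F} :
    w ∈ Yset ε i ↔ w.z = gam ε i w.x w.y := by
  constructor
  · rintro ⟨α, β, -, rfl⟩
    rfl
  · intro h
    refine ⟨w.x, w.y, fun h0 => hw (Prod.mk.inj h0), ?_⟩
    ext <;> simp [gElt, h]

lemma eq_of_forall_mem_Yset (hε : ¬IsSquare ε) {w w' : Heis F} (hw : w ∉ Zset F)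
    (hx : w'.x = w.x) (hy : w'.y = w.y) (hY : ∀ i, w ∈ Yset ε i → w' ∈ Yset ε i) :
    w' = w := by
  obtain ⟨i, hi⟩ := exists_gam_eq hε hw w.z
  have hw' : w' ∉ Zset F := by simpa [Zset, hx, hy] using hw
  have hz := (mem_Yset_iff hw').1 (hY i ((mem_Yset_iff hw).2 hi.symm))
  ext
  · exact hx
  · exact hy
  · rw [hz, hx, hy, hi]

end Yset

namespace Preserves

variable {F : Type*} [Field F] {ε : F} {f : Heis F → Heis F}

lemma mul_inv_mem_Yset_iff (hf : Preserves ε f) (i : F) (g h : Heis F) :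
    h * g⁻¹ ∈ Yset ε i ↔ f h * (f g)⁻¹ ∈ Yset ε i :=
  hf _ (by simp [SFam]) g h

lemma mul_inv_mem_Zset_iff (hf : Preserves ε f) (g h : Heis F) :
    h * g⁻¹ ∈ Zset F ↔ f h * (f g)⁻¹ ∈ Zset F := by
  have hZ : Zset F = (Zset F \ {1}) ∪ {1} :=
    (Set.sdiff_union_of_subset (by simp [Zset])).symm
  rw [hZ, Set.mem_union, Set.mem_union, hf _ (by simp [SFam]) g h, hf _ (by simp [SFam]) g h]

lemma apply_eq_of_mul_inv_mem_Zset (hε : ¬IsSquare ε) (hf : Preserves ε f) {a b h : Heis F}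
    (ha : f a = a) (hb : f b = b) (hab : a * b⁻¹ ∉ Zset F) (hh : h * a⁻¹ ∈ Zset F) :
    f h = h := by
  have hfh : f h * a⁻¹ ∈ Zset F := by simpa [ha] using (hf.mul_inv_mem_Zset_iff a h).1 hh
  rw [Heis.mul_inv_mem_Zset_iff] at hh hfh hab
  have hhb : h * b⁻¹ ∉ Zset F := by rwa [Heis.mul_inv_mem_Zset_iff, hh.1, hh.2]
  refine mul_right_cancel (b := b⁻¹) (eq_of_forall_mem_Yset hε hhb ?_ ?_ fun i hi => ?_)
  · simp [hfh.1, hh.1]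
  · simp [hfh.2, hh.2]
  · simpa [hb] using (hf.mul_inv_mem_Yset_iff i b h).1 hi

end Preserves

theorem statement_10_general {F : Type*} [Field F]
    (ε : F) (hε : ¬IsSquare ε)
    (f : Equiv.Perm (Heis F)) (hf : Preserves ε ⇑f)
    (h1 : f 1 = 1) (hy0 : f (gElt 1 0 0) = gElt 1 0 0) :
    (∀ z ∈ Zset F, f z = z) ∧
    ∀ y : Heis F, y ∉ Zset F → f y = y →
      (⇑f '' ((fun z => z * y) '' Zset F) = (fun z => z * y) '' Zset F) ∧
      (∀ z ∈ Zset F, f (z * y) = z * y) := by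
  refine ⟨fun z hz => hf.apply_eq_of_mul_inv_mem_Zset hε h1 hy0 ?_ (by simpa using hz),
    fun y hy hfy => ?_⟩
  · simp [Zset, gElt]
  have hcoset : ∀ z ∈ Zset F, f (z * y) = z * y := fun z hz =>
    hf.apply_eq_of_mul_inv_mem_Zset hε hfy h1 (by simpa using hy) (by simpa using hz)
  refine ⟨Set.EqOn.image_eq_self ?_, hcoset⟩
  rintro _ ⟨z, hz, rfl⟩
  exact hcoset z hz

/-- Let `f` be a permutation of `G` preserving every set
`S ∈ {{e}, Z \ {e}} ∪ {Y_i : i ∈ F_q}` in the sense that `hg⁻¹ ∈ S ↔ f(h)f(g)⁻¹ ∈ S`.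
If `f(e) = e` and `f(y₀) = y₀` with `y₀ = g(1,0,0)`, then `f` fixes `Z` pointwise;
moreover if additionally `f(y) = y` for some `y ∈ G \ Z`, then `f(Zy) = Zy` and `f`
fixes the coset `Zy` pointwise. -/
theorem statement_10 {F : Type*} [Field F] [Fintype F]
    (hodd : Odd (Fintype.card F)) (ε : F) (hε : ¬IsSquare ε)
    (f : Equiv.Perm (Heis F)) (hf : Preserves ε ⇑f)
    (h1 : f 1 = 1) (hy0 : f (gElt 1 0 0) = gElt 1 0 0) :
    (∀ z ∈ Zset F, f z = z) ∧
    ∀ y : Heis F, y ∉ Zset F → f y = y →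
      (⇑f '' ((fun z => z * y) '' Zset F) = (fun z => z * y) '' Zset F) ∧
      (∀ z ∈ Zset F, f (z * y) = z * y) :=
  statement_10_general ε hε f hf h1 hy0
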